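/- arXiv:1410.4109 — 5 statements merged into one kernel-verified Lean document; each statement's English description precedes it below -/
import Mathlib

section
/- For every integer n ≥ 2, the generating function g_n(12) for permutations whose flattened permutation begins with the letters 1,2 satisfies g_n(12) = 2·g_{n-1} in ℤ[q]. -/
/-!
Deleting the letter `0` (`Equiv.Perm.decomposeFin`) identifies a permutation `π` of
`Fin (m + 2)` with the pair `(π 0, e)`, where `e` permutes `Fin (m + 1)`. The cycle of `0` comes
first in the standard cycle form, so when `π 0 ≠ 0` the flattened word starts with `1, π 0 + 1`;
hence it can start with `12` only if `π 0 ∈ {0, 1}`. For both of these values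
`Flatten(π) = 1 :: (Flatten(e) + 1)`: if `π 0 = 0` then `0` is a fixed point, and if `π 0 = 1` then
`0` is inserted just before `1` in the first cycle of `e`, leaving all other cycle minima in
place. Since `Flatten(e)` starts with `1`, the new leading `1` is followed by `2` and creates no
occurrence of 13-2, so each of the two values contributes `g_{n-1}`.
-/

open Finset Polynomial

/-- The cycle of `π` starting at `m`: `m, π m, π² m, …` through one full period. -/
noncomputable def cycleList {n : ℕ} (π : Equiv.Perm (Fin n)) (m : Fin n) : List (Fin n) :=
  (List.range (Function.minimalPeriod π m)).map (fun k => (π ^ k) m)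

/-- The minima of the cycles of `π`, listed in increasing order. -/
def cycleMins {n : ℕ} (π : Equiv.Perm (Fin n)) : List (Fin n) :=
  (Finset.univ.filter (fun m : Fin n => ∀ k < n, m ≤ (π ^ k) m)).sort (· ≤ ·)

/-- The flattened permutation of `π`, as a word on the letters `1, …, n`:
erase the parentheses from the standard cycle form of `π`. -/
noncomputable def flattenPerm {n : ℕ} (π : Equiv.Perm (Fin n)) : List ℕ :=
  ((cycleMins π).map (cycleList π)).flatten.map (fun m => (m : ℕ) + 1)

/-- The number of occurrences of the pattern 13-2 in the word `w = w₁w₂⋯wₙ`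
(1-based), i.e. the number of pairs `(i,j)` with `2 ≤ i < j ≤ n` and
`w_{i-1} < w_j < w_i`.  Below, `p.1` and `p.2` are the 0-based versions of `i` and `j`. -/
def occ (w : List ℕ) : ℕ :=
  ((Finset.range w.length ×ˢ Finset.range w.length).filter
    (fun p : ℕ × ℕ => 1 ≤ p.1 ∧ p.1 < p.2 ∧
      w.getD (p.1 - 1) 0 < w.getD p.2 0 ∧ w.getD p.2 0 < w.getD p.1 0)).card

/-- `g_n = Σ_{π ∈ S_n} q^{occ(Flatten(π))} ∈ ℤ[q]`. -/
noncomputable def gPoly (n : ℕ) : Polynomial ℤ :=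
  ∑ π : Equiv.Perm (Fin n), X ^ occ (flattenPerm π)

/-- `g_n(a₁⋯a_k)`: the sum of `q^{occ(Flatten(π))}` over the permutations `π` of length `n`
whose flattened permutation starts with the subword `a₁⋯a_k`. -/
noncomputable def gPrefix (n : ℕ) (w : List ℕ) : Polynomial ℤ :=
  ∑ π ∈ Finset.univ.filter (fun π : Equiv.Perm (Fin n) => w <+: flattenPerm π),
    X ^ occ (flattenPerm π)

/-- `g_{n,r}(a₁⋯a_k)`: the number of permutations `π` of length `n` such that `Flatten(π)`
starts with `a₁⋯a_k` and has exactly `r` occurrences of the pattern 13-2. -/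
noncomputable def gCount (n r : ℕ) (w : List ℕ) : ℕ :=
  (Finset.univ.filter (fun π : Equiv.Perm (Fin n) =>
    w <+: flattenPerm π ∧ occ (flattenPerm π) = r)).card

open Equiv Equiv.Perm Function

namespace Equiv.Perm

variable {α : Type*}

theorem minimalPeriod_pos [Finite α] (π : Perm α) (x : α) : 0 < minimalPeriod π x :=
  minimalPeriod_pos_of_mem_periodicPts (π.injective.mem_periodicPts x)

theorem pow_mod_minimalPeriod_apply (π : Perm α) (x : α) (k : ℕ) :
    (π ^ (k % minimalPeriod π x)) x = (π ^ k) x := by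
  simpa only [iterate_eq_pow] using iterate_mod_minimalPeriod_eq (f := π) (x := x) (n := k)

end Equiv.Perm

theorem occ_map_of_strictMono {f : ℕ → ℕ} (hf : StrictMono f) (w : List ℕ) :
    occ (w.map f) = occ w := by
  have hget : ∀ i < w.length, (w.map f).getD i 0 = f (w.getD i 0) := fun i hi => by
    rw [List.getD_eq_getElem _ _ (by simpa using hi), List.getElem_map,
      List.getD_eq_getElem _ _ hi]
  unfold occ
  rw [List.length_map]
  refine congrArg card (filter_congr fun p hp => ?_)
  simp only [mem_product, mem_range] at hp
  rw [hget _ (by omega), hget _ hp.1, hget _ hp.2, hf.lt_iff_lt, hf.lt_iff_lt]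

theorem occ_cons_cons {a b : ℕ} (w : List ℕ) (hab : b ≤ a + 1) :
    occ (a :: b :: w) = occ (b :: w) := by
  simp only [occ, card_filter, sum_product, List.length_cons]
  rw [sum_range_succ']
  simp only [sum_range_succ' _ (w.length + 1), Nat.not_lt_zero, and_false, if_false,
    add_zero, Nat.le_zero, one_ne_zero, false_and, sum_const_zero]
  refine sum_congr rfl fun x _ => sum_congr rfl fun y _ => if_congr ?_ rfl rfl
  rcases x with _ | x
  · simp only [zero_add, Nat.sub_self, List.getD_cons_zero, List.getD_cons_succ]
    omega
  · simp only [List.getD_cons_succ, Nat.add_sub_cancel]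
    omega

section CycleForm

variable {N : ℕ}

theorem mem_cycleMins_iff (π : Perm (Fin N)) (m : Fin N) :
    m ∈ cycleMins π ↔ ∀ k, m ≤ (π ^ k) m := by
  simp only [cycleMins, mem_sort, mem_filter, mem_univ, true_and]
  refine ⟨fun h k => ?_, fun h k _ => h k⟩
  rw [← pow_mod_minimalPeriod_apply]
  refine h _ ((Nat.mod_lt _ (minimalPeriod_pos π m)).trans_le ?_)
  simpa using minimalPeriod_le_card (f := π) (x := m)

theorem pairwise_lt_cycleMins (π : Perm (Fin N)) : (cycleMins π).Pairwise (· < ·) :=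
  (sortedLT_sort _).pairwise

theorem flattenPerm_eq_map (π : Perm (Fin N)) :
    flattenPerm π = ((cycleMins π).flatMap (cycleList π)).map (fun m : Fin N => (m : ℕ) + 1) := by
  simp only [flattenPerm, List.pure_def, List.bind_eq_flatMap]
  rw [← List.map_eq_flatMap, List.map_map, List.flatMap_def]
  rfl

theorem pairwise_lt_zero_cons_map_succ {l : List (Fin N)} (hl : l.Pairwise (· < ·)) :
    (0 :: l.map Fin.succ).Pairwise (· < ·) :=
  List.pairwise_cons.2 ⟨by simp [Fin.succ_pos], hl.map _ fun _ _ => Fin.succ_lt_succ_iff.2⟩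

theorem cycleMins_eq_zero_cons (π : Perm (Fin (N + 1))) : ∃ t, cycleMins π = 0 :: t := by
  have h0 : (0 : Fin (N + 1)) ∈ cycleMins π := (mem_cycleMins_iff π 0).2 fun _ => Fin.zero_le _
  obtain ⟨a, t, ht⟩ := List.exists_cons_of_ne_nil (List.ne_nil_of_mem h0)
  have hsorted := pairwise_lt_cycleMins π
  rw [ht, List.pairwise_cons] at hsorted
  rw [ht, List.mem_cons] at h0
  rcases h0 with rfl | h0
  · exact ⟨t, ht⟩
  · exact absurd (hsorted.1 0 h0) (Fin.not_lt_zero a)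

theorem not_sameCycle_zero_of_mem_cycleMins {π : Perm (Fin (N + 1))} {i : Fin (N + 1)}
    (hi : i ∈ cycleMins π) (hi0 : i ≠ 0) : ¬ SameCycle π i 0 := fun h => by
  obtain ⟨k, hk⟩ := h.exists_nat_pow_eq
  exact hi0 (Fin.le_zero_iff.1 (hk ▸ (mem_cycleMins_iff π i).1 hi k))

theorem cycleList_eq_cons (π : Perm (Fin N)) (m : Fin N) : ∃ c, cycleList π m = m :: c := by
  obtain ⟨T, hT⟩ := Nat.exists_eq_add_one.2 (minimalPeriod_pos π m)
  exact ⟨_, by rw [cycleList, hT, List.range_succ_eq_map, List.map_cons]; rfl⟩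

theorem cycleList_eq_cons_cons {π : Perm (Fin N)} {m : Fin N} (hm : π m ≠ m) :
    ∃ c, cycleList π m = m :: π m :: c := by
  obtain ⟨T, hT⟩ : ∃ T, minimalPeriod π m = T + 2 := by
    have := minimalPeriod_pos π m
    have : minimalPeriod π m ≠ 1 := fun h => hm (minimalPeriod_eq_one_iff_isFixedPt.1 h)
    exact ⟨minimalPeriod π m - 2, by omega⟩
  exact ⟨_, by rw [cycleList, hT, List.range_succ_eq_map, List.range_succ_eq_map]; rfl⟩

theorem flattenPerm_eq_append (π : Perm (Fin (N + 1))) :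
    ∃ u, flattenPerm π = (cycleList π 0).map (fun m : Fin (N + 1) => (m : ℕ) + 1) ++ u := by
  obtain ⟨t, ht⟩ := cycleMins_eq_zero_cons π
  exact ⟨_, by rw [flattenPerm_eq_map, ht, List.flatMap_cons, List.map_append]⟩

theorem flattenPerm_eq_one_cons (π : Perm (Fin (N + 1))) : ∃ u, flattenPerm π = 1 :: u := by
  obtain ⟨u, hu⟩ := flattenPerm_eq_append π
  obtain ⟨c, hc⟩ := cycleList_eq_cons π 0
  exact ⟨_, by rw [hu, hc]; rfl⟩

theorem flattenPerm_eq_one_cons_cons {π : Perm (Fin (N + 1))} (hπ : π 0 ≠ 0) :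
    ∃ u, flattenPerm π = 1 :: ((π 0 : ℕ) + 1) :: u := by
  obtain ⟨u, hu⟩ := flattenPerm_eq_append π
  obtain ⟨c, hc⟩ := cycleList_eq_cons_cons hπ
  exact ⟨_, by rw [hu, hc]; rfl⟩

theorem cycleList_succ_of_pow_apply {π : Perm (Fin (N + 1))} {e : Perm (Fin N)} {i : Fin N}
    (h : ∀ k, (π ^ k) i.succ = ((e ^ k) i).succ) :
    cycleList π i.succ = (cycleList e i).map Fin.succ := by
  have hper : minimalPeriod π i.succ = minimalPeriod e i :=
    minimalPeriod_eq_minimalPeriod_iff.2 fun k => by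
      simp only [IsPeriodicPt, IsFixedPt, iterate_eq_pow, h, Fin.succ_inj]
  simp only [cycleList, hper, List.map_map]
  exact List.map_congr_left fun k _ => h k

end CycleForm

section FixingZero

variable {M : ℕ} (e : Perm (Fin M))

theorem decomposeFin_symm_zero_pow_apply_succ (k : ℕ) (i : Fin M) :
    (decomposeFin.symm (0, e) ^ k) i.succ = ((e ^ k) i).succ := by
  induction k with
  | zero => rfl
  | succ k ih => rw [pow_succ', mul_apply, ih, decomposeFin_symm_apply_succ, swap_self,
      refl_apply, pow_succ', mul_apply]

theorem cycleMins_decomposeFin_symm_zero :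
    cycleMins (decomposeFin.symm (0, e)) = 0 :: (cycleMins e).map Fin.succ := by
  refine (pairwise_lt_cycleMins _).eq_of_mem_iff
    (pairwise_lt_zero_cons_map_succ (pairwise_lt_cycleMins e)) fun m => ?_
  induction m using Fin.cases with
  | zero => simp [mem_cycleMins_iff]
  | succ i => simp [mem_cycleMins_iff, decomposeFin_symm_zero_pow_apply_succ, Fin.succ_ne_zero]

theorem flattenPerm_decomposeFin_symm_zero :
    flattenPerm (decomposeFin.symm (0, e)) = 1 :: (flattenPerm e).map (· + 1) := by
  have hzero : cycleList (decomposeFin.symm (0, e)) 0 = [0] := by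
    rw [cycleList, minimalPeriod_eq_one_iff_isFixedPt.2 (decomposeFin_symm_apply_zero 0 e)]
    rfl
  simp [flattenPerm_eq_map, cycleMins_decomposeFin_symm_zero, hzero, List.flatMap_map,
    cycleList_succ_of_pow_apply (decomposeFin_symm_zero_pow_apply_succ e · _),
    ← List.map_flatMap, Function.comp_def]

end FixingZero

section ZeroToOne

variable {M : ℕ} (e : Perm (Fin (M + 1)))

theorem decomposeFin_symm_one_apply_succ_of_ne {i : Fin (M + 1)} (hi : e i ≠ 0) :
    decomposeFin.symm (1, e) i.succ = (e i).succ := by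
  rw [decomposeFin_symm_apply_succ, ← Fin.succ_zero_eq_one]
  exact swap_apply_of_ne_of_ne (Fin.succ_ne_zero _) (by rwa [Ne, Fin.succ_inj])

theorem decomposeFin_symm_one_apply_succ_of_eq {i : Fin (M + 1)} (hi : e i = 0) :
    decomposeFin.symm (1, e) i.succ = 0 := by
  rw [decomposeFin_symm_apply_succ, hi, Fin.succ_zero_eq_one, swap_apply_right]

theorem decomposeFin_symm_one_pow_apply_succ {i : Fin (M + 1)} (hi : ¬ SameCycle e i 0)
    (k : ℕ) : (decomposeFin.symm (1, e) ^ k) i.succ = ((e ^ k) i).succ := by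
  induction k with
  | zero => rfl
  | succ k ih =>
    have hk : e ((e ^ k) i) ≠ 0 := fun h =>
      hi (sameCycle_pow_left.1 (by rw [pow_succ', mul_apply, h]))
    rw [pow_succ', mul_apply, ih, decomposeFin_symm_one_apply_succ_of_ne e hk, pow_succ',
      mul_apply]

theorem decomposeFin_symm_one_pow_succ_apply_zero {k : ℕ} (hk : k < minimalPeriod e 0) :
    (decomposeFin.symm (1, e) ^ (k + 1)) 0 = ((e ^ k) 0).succ := by
  induction k with
  | zero => simp [decomposeFin_symm_apply_zero]
  | succ k ih =>
    have hk' : e ((e ^ k) 0) ≠ 0 := by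
      rw [← mul_apply, ← pow_succ']
      exact not_isPeriodicPt_of_pos_of_lt_minimalPeriod k.succ_ne_zero hk
    rw [pow_succ', mul_apply, ih (by omega), decomposeFin_symm_one_apply_succ_of_ne e hk',
      pow_succ', mul_apply]

theorem minimalPeriod_decomposeFin_symm_one :
    minimalPeriod (decomposeFin.symm (1, e)) 0 = minimalPeriod e 0 + 1 := by
  set π := decomposeFin.symm (1, e)
  obtain ⟨T, hT⟩ := Nat.exists_eq_add_one.2 (minimalPeriod_pos e 0)
  have hper : IsPeriodicPt π (T + 2) 0 := by
    have he : e ((e ^ T) 0) = 0 := by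
      rw [← mul_apply, ← pow_succ', ← hT]
      exact isPeriodicPt_minimalPeriod e 0
    rw [IsPeriodicPt, IsFixedPt, iterate_eq_pow, pow_succ', mul_apply,
      decomposeFin_symm_one_pow_succ_apply_zero e (by omega),
      decomposeFin_symm_one_apply_succ_of_eq e he]
  obtain ⟨j, hj⟩ := Nat.exists_eq_add_one.2 (minimalPeriod_pos π 0)
  refine le_antisymm (by rw [hT]; exact hper.minimalPeriod_le (by omega)) (hj ▸ ?_)
  by_contra! hlt
  have hback : (π ^ (j + 1)) 0 = 0 := by
    rw [← hj, ← iterate_eq_pow]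
    exact isPeriodicPt_minimalPeriod π 0
  rw [decomposeFin_symm_one_pow_succ_apply_zero e (by omega)] at hback
  exact Fin.succ_ne_zero _ hback

theorem cycleList_decomposeFin_symm_one_zero :
    cycleList (decomposeFin.symm (1, e)) 0 = 0 :: (cycleList e 0).map Fin.succ := by
  rw [cycleList, minimalPeriod_decomposeFin_symm_one, List.range_succ_eq_map, List.map_cons,
    List.map_map, cycleList, List.map_map]
  congr 1
  exact List.map_congr_left fun k hk =>
    decomposeFin_symm_one_pow_succ_apply_zero e (List.mem_range.1 hk)

theorem succ_mem_cycleMins_decomposeFin_symm_one_iff (i : Fin (M + 1)) :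
    i.succ ∈ cycleMins (decomposeFin.symm (1, e)) ↔ i ≠ 0 ∧ i ∈ cycleMins e := by
  by_cases hi : SameCycle e i 0
  · refine iff_of_false (fun hmem => ?_) fun ⟨hi0, hmem⟩ =>
      not_sameCycle_zero_of_mem_cycleMins hmem hi0 hi
    obtain ⟨j, hj⟩ := hi.symm.exists_nat_pow_eq
    rw [← pow_mod_minimalPeriod_apply] at hj
    have hπ := decomposeFin_symm_one_pow_succ_apply_zero e (Nat.mod_lt j (minimalPeriod_pos e 0))
    rw [hj] at hπ
    refine not_sameCycle_zero_of_mem_cycleMins hmem (Fin.succ_ne_zero i) (SameCycle.symm ?_)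
    exact hπ ▸ sameCycle_pow_right.2 (SameCycle.refl _ _)
  · have hi0 : i ≠ 0 := by rintro rfl; exact hi (SameCycle.refl _ _)
    simp [mem_cycleMins_iff, decomposeFin_symm_one_pow_apply_succ e hi, hi0]

theorem cycleMins_decomposeFin_symm_one {t : List (Fin (M + 1))} (ht : cycleMins e = 0 :: t) :
    cycleMins (decomposeFin.symm (1, e)) = 0 :: t.map Fin.succ := by
  have hsorted := pairwise_lt_cycleMins e
  rw [ht, List.pairwise_cons] at hsorted
  refine (pairwise_lt_cycleMins _).eq_of_mem_iff
    (pairwise_lt_zero_cons_map_succ hsorted.2) fun m => ?_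
  induction m using Fin.cases with
  | zero => simp [mem_cycleMins_iff]
  | succ i =>
    rw [succ_mem_cycleMins_decomposeFin_symm_one_iff, ht]
    simp only [List.mem_cons, Fin.succ_ne_zero, false_or, List.mem_map, Fin.succ_inj,
      exists_eq_right]
    exact ⟨fun ⟨hi0, hi⟩ => hi.resolve_left hi0, fun hi => ⟨(hsorted.1 i hi).ne', Or.inr hi⟩⟩

theorem flattenPerm_decomposeFin_symm_one :
    flattenPerm (decomposeFin.symm (1, e)) = 1 :: (flattenPerm e).map (· + 1) := by
  obtain ⟨t, ht⟩ := cycleMins_eq_zero_cons e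
  have hcyc : ∀ i ∈ t,
      cycleList (decomposeFin.symm (1, e)) i.succ = (cycleList e i).map Fin.succ := by
    intro i hi
    have hsorted := pairwise_lt_cycleMins e
    rw [ht, List.pairwise_cons] at hsorted
    refine cycleList_succ_of_pow_apply (decomposeFin_symm_one_pow_apply_succ e ?_)
    exact not_sameCycle_zero_of_mem_cycleMins (ht ▸ List.mem_cons_of_mem 0 hi)
      (hsorted.1 i hi).ne'
  simp [flattenPerm_eq_map, cycleMins_decomposeFin_symm_one e ht, ht, List.flatMap_congr hcyc,
    cycleList_decomposeFin_symm_one_zero, List.flatMap_map, ← List.map_flatMap, Function.comp_def]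

end ZeroToOne

section Assembly

variable {N : ℕ}

theorem not_one_two_prefix_flattenPerm {π : Perm (Fin (N + 2))} (h0 : π 0 ≠ 0) (h1 : π 0 ≠ 1) :
    ¬ [1, 2] <+: flattenPerm π := by
  obtain ⟨u, hu⟩ := flattenPerm_eq_one_cons_cons h0
  rintro ⟨s, hs⟩
  rw [hu, List.cons_append, List.cons_append, List.cons.injEq, List.cons.injEq] at hs
  exact h1 (Fin.ext (by rw [Fin.val_one]; omega))

theorem one_two_prefix_one_cons_map_succ_flattenPerm (e : Perm (Fin (N + 1))) :
    [1, 2] <+: 1 :: (flattenPerm e).map (· + 1) := by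
  obtain ⟨u, hu⟩ := flattenPerm_eq_one_cons e
  exact ⟨u.map (· + 1), by rw [hu]; rfl⟩

theorem occ_one_cons_map_succ_flattenPerm (e : Perm (Fin (N + 1))) :
    occ (1 :: (flattenPerm e).map (· + 1)) = occ (flattenPerm e) := by
  obtain ⟨u, hu⟩ := flattenPerm_eq_one_cons e
  rw [hu, List.map_cons, occ_cons_cons _ le_rfl]
  exact occ_map_of_strictMono (fun _ _ => Nat.succ_lt_succ) (1 :: u)

end Assembly

/-- For every `n ≥ 2`, `g_n(12) = 2·g_{n-1}` in `ℤ[q]`. -/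
theorem gPrefix_one_two (n : ℕ) (hn : 2 ≤ n) :
    gPrefix n [1, 2] = 2 * gPoly (n - 1) := by
  obtain ⟨M, rfl⟩ : ∃ M, n = M + 2 := ⟨n - 2, by omega⟩
  have hrest : ∀ (q : Fin M) e,
      ¬ [1, 2] <+: flattenPerm (decomposeFin.symm (q.succ.succ, e)) := fun q e =>
    not_one_two_prefix_flattenPerm
      (by rw [decomposeFin_symm_apply_zero]; exact Fin.succ_ne_zero _)
      (by rw [decomposeFin_symm_apply_zero]; exact Fin.succ_succ_ne_one q)
  rw [gPrefix, sum_filter, ← decomposeFin.symm.sum_comp, Fintype.sum_prod_type,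
    Fin.sum_univ_succ, Fin.sum_univ_succ]
  simp only [Fin.succ_zero_eq_one, flattenPerm_decomposeFin_symm_zero,
    flattenPerm_decomposeFin_symm_one, one_two_prefix_one_cons_map_succ_flattenPerm,
    occ_one_cons_map_succ_flattenPerm, hrest, if_true, if_false, sum_const_zero, add_zero]
  exact (two_mul (gPoly (M + 1))).symm
end

section
/- As formal power series in x and y over ℤ[q], one has ((1−x)(1−qx) − xy) · Σ_{k≥2} Σ_{j≥1} a_{k,j} x^{k-2} y^{j-1} = 1 − qx + xy, where the polynomials a_{k,j} ∈ ℤ[q] (k ≥ 2, j ∈ ℤ) are defined by a_{2,j} = 1 if j = 1 and 0 otherwise, a_{3,j} = j if j ∈ {1,2} and 0 otherwise, and a_{k,j} = (1+q)·a_{k-1,j} − q·a_{k-2,j} + a_{k-1,j-1} for k ≥ 4. -/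
open Finset Polynomial

/-- The double sequence `a_{k,j} ∈ ℤ[q]` of the paper:
`a_{2,j} = χ(j=1)`, `a_{3,j} = j·χ(j∈{1,2})`, and
`a_{k,j} = (1+q)a_{k-1,j} − q·a_{k-2,j} + a_{k-1,j-1}` for `k ≥ 4`. -/
noncomputable def aP : ℕ → ℤ → Polynomial ℤ
  | 0, _ => 0
  | 1, _ => 0
  | 2, j => if j = 1 then 1 else 0
  | 3, j => if j = 1 then 1 else if j = 2 then 2 else 0
  | (k + 4), j => (1 + X) * aP (k + 3) j - X * aP (k + 2) j + aP (k + 3) (j - 1)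

/-!
Since `(1 - x)(1 - qx) - xy = 1 - (1 + q)x + qx² - xy`, the coefficient of `x^m y^n` in the
product is the recurrence for `a_{m+2,n+1}` with everything moved to one side. Because
`a_{k,j} = 0` for `k ≤ 1` and for `j ≤ 0`, multiplying by `x` or `y` merely shifts the
coefficient function, with no boundary cases. The recurrence holds for `m ≥ 2`, and in the rows
`m = 0, 1` only the initial values `a_2, a_3` survive, giving `1 - qx + xy`.
-/

namespace MvPowerSeries

section CommSemiring

variable {σ R : Type*} [CommSemiring R]

theorem coeff_X_mul [DecidableEq σ] (φ : MvPowerSeries σ R) (s : σ) (d : σ →₀ ℕ) :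
    coeff d (X s * φ) = if d s = 0 then 0 else coeff (d - Finsupp.single s 1) φ := by
  rw [X_def, coeff_monomial_mul, one_mul]
  by_cases h : d s = 0
  · rw [if_pos h, if_neg (by simp [Finsupp.single_le_iff, h])]
  · rw [if_neg h, if_pos (by simp [Finsupp.single_le_iff]; omega)]

/-- The series `Σ F m n x^m y^n`; the second index is an integer, as for `aP`. -/
def bivariate (F : ℕ → ℤ → R) : MvPowerSeries (Fin 2) R :=
  fun d => F (d 0) (d 1)

theorem coeff_bivariate (F : ℕ → ℤ → R) (d : Fin 2 →₀ ℕ) :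
    coeff d (bivariate F) = F (d 0) (d 1) :=
  rfl

theorem X_zero_mul_bivariate (F : ℕ → ℤ → R) (hF : ∀ j, F 0 j = 0) :
    X 0 * bivariate (fun m n => F (m + 1) n) = bivariate F := by
  ext d
  rw [coeff_X_mul, coeff_bivariate, coeff_bivariate]
  split_ifs with h
  · rw [h, hF]
  · simp only [Finsupp.tsub_apply, Finsupp.single_eq_same, Fin.isValue,
      Finsupp.single_eq_of_ne (show (1 : Fin 2) ≠ 0 by decide), tsub_zero]
    congr 1
    omega

theorem X_one_mul_bivariate (F : ℕ → ℤ → R) (hF : ∀ i, F i 0 = 0) :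
    X 1 * bivariate (fun m n => F m (n + 1)) = bivariate F := by
  ext d
  rw [coeff_X_mul, coeff_bivariate, coeff_bivariate]
  split_ifs with h
  · rw [h, Nat.cast_zero, hF]
  · simp only [Finsupp.tsub_apply, Finsupp.single_eq_same, Fin.isValue,
      Finsupp.single_eq_of_ne (show (0 : Fin 2) ≠ 1 by decide), tsub_zero]
    congr 1
    omega

end CommSemiring

theorem one_sub_C_mul_X_zero_add_X_zero_mul_X_one {R : Type*} [CommRing R] (c : R) :
    (1 - C c * X 0 + X 0 * X 1 : MvPowerSeries (Fin 2) R) =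
      bivariate (fun m n => if m = 0 ∧ n = 0 then 1 else if m = 1 ∧ n = 0 then -c
        else if m = 1 ∧ n = 1 then 1 else 0) := by
  ext d
  rw [X_def, X_def, monomial_mul_monomial, one_mul]
  simp only [map_add, map_sub, coeff_one, coeff_C_mul, coeff_monomial, coeff_bivariate,
    Finsupp.ext_iff, Fin.forall_fin_two]
  split_ifs <;> simp_all

end MvPowerSeries

theorem aP_eq_zero_of_nonpos : ∀ (k : ℕ) (j : ℤ), j ≤ 0 → aP k j = 0
  | 0, _, _ | 1, _, _ => rfl
  | 2, j, h => if_neg (by omega)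
  | 3, j, h => by rw [aP, if_neg (by omega), if_neg (by omega)]
  | k + 4, j, h => by
    rw [aP, aP_eq_zero_of_nonpos (k + 3) j h, aP_eq_zero_of_nonpos (k + 2) j h,
      aP_eq_zero_of_nonpos (k + 3) (j - 1) (by omega)]
    ring

theorem aP_recurrence_defect (m n : ℕ) :
    aP (m + 2) (n + 1) - aP (m + 1) (n + 1) - X * aP (m + 1) (n + 1) + X * aP m (n + 1)
        - aP (m + 1) n =
      if m = 0 ∧ (n : ℤ) = 0 then 1 else if m = 1 ∧ (n : ℤ) = 0 then -X
        else if m = 1 ∧ (n : ℤ) = 1 then 1 else 0 := by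
  match m, n with
  | 0, n => simp [aP]
  | 1, 0 => simp [aP]
  | 1, 1 => norm_num [aP]
  | 1, n + 2 =>
    simp [aP, show (n : ℤ) + 2 ≠ 0 by omega, show (n : ℤ) + 2 ≠ 1 by omega,
      show (n : ℤ) + 2 + 1 ≠ 2 by omega]
  | m + 2, n =>
    rw [show m + 2 + 2 = m + 4 by rfl, aP, add_sub_cancel_right]
    simp only [show m + 2 ≠ 0 by omega, show m + 2 ≠ 1 by omega, false_and, if_false]
    ring

/-- As formal power series in `x` and `y` over `ℤ[q]`,
`((1−x)(1−qx) − xy)·Σ_{k≥2} Σ_{j≥1} a_{k,j} x^{k-2} y^{j-1} = 1 − qx + xy`. -/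
theorem aP_generating_function :
    letI q : MvPowerSeries (Fin 2) (Polynomial ℤ) := MvPowerSeries.C X
    letI x : MvPowerSeries (Fin 2) (Polynomial ℤ) := MvPowerSeries.X 0
    letI y : MvPowerSeries (Fin 2) (Polynomial ℤ) := MvPowerSeries.X 1
    letI A : MvPowerSeries (Fin 2) (Polynomial ℤ) := fun d => aP (d 0 + 2) ((d 1 : ℤ) + 1)
    ((1 - x) * (1 - q * x) - x * y) * A = 1 - q * x + x * y := by
  set q : MvPowerSeries (Fin 2) ℤ[X] := MvPowerSeries.C X
  set x : MvPowerSeries (Fin 2) ℤ[X] := MvPowerSeries.X 0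
  set y : MvPowerSeries (Fin 2) ℤ[X] := MvPowerSeries.X 1
  set A := MvPowerSeries.bivariate fun m n => aP (m + 2) (n + 1)
  have hxA : x * A = MvPowerSeries.bivariate (fun m n => aP (m + 1) (n + 1)) :=
    MvPowerSeries.X_zero_mul_bivariate (fun m n => aP (m + 1) (n + 1)) fun _ => rfl
  have hxxA : x * (x * A) = MvPowerSeries.bivariate (fun m n => aP m (n + 1)) := by
    rw [hxA]
    exact MvPowerSeries.X_zero_mul_bivariate (fun m n => aP m (n + 1)) fun _ => rfl
  have hyA : y * A = MvPowerSeries.bivariate (fun m n => aP (m + 2) n) :=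
    MvPowerSeries.X_one_mul_bivariate (fun m n => aP (m + 2) n) fun _ =>
      aP_eq_zero_of_nonpos _ _ le_rfl
  have hxyA : x * (y * A) = MvPowerSeries.bivariate (fun m n => aP (m + 1) n) := by
    rw [hyA]
    exact MvPowerSeries.X_zero_mul_bivariate (fun m n => aP (m + 1) n) fun _ => rfl
  calc ((1 - x) * (1 - q * x) - x * y) * A
      = A - x * A - q * (x * A) + q * (x * (x * A)) - x * (y * A) := by ring
    _ = 1 - q * x + x * y := by
      rw [hxxA, hxyA, hxA, MvPowerSeries.one_sub_C_mul_X_zero_add_X_zero_mul_X_one]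
      refine MvPowerSeries.ext fun d => ?_
      simp only [A, q, map_sub, map_add, MvPowerSeries.coeff_C_mul, MvPowerSeries.coeff_bivariate]
      exact aP_recurrence_defect (d 0) (d 1)
end

section
/- For every integer n ≥ 2, one has Σ_{j=1}^{n-1} ((n−1+j)/j)·C(n−2, j−1)·(−1)^{j-1}·2^{n-j} = 2^n. -/
open Finset Polynomial

/-!
Since `(n - 1 + j) / j * C(n - 2, j - 1) = C(n - 2, j - 1) + C(n - 1, j)`, the sum splits into two
binomial expansions of `(x + y)^k` at `x = -1`, `y = 2`, contributing `2` and `2^n - 2`.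
-/

section Binomial

variable {R : Type*} [CommRing R] (x y : R) (m : ℕ)

theorem sum_range_choose_mul_pow_mul_pow_succ :
    ∑ i ∈ range (m + 1), (m.choose i : R) * x ^ i * y ^ (m + 1 - i) = y * (x + y) ^ m := by
  rw [add_pow, mul_sum]
  refine sum_congr rfl fun i hi => ?_
  rw [Nat.sub_add_comm (mem_range_succ_iff.mp hi), pow_succ]
  ring

theorem mul_sum_range_choose_succ_mul_pow_mul_pow :
    x * ∑ i ∈ range (m + 1), ((m + 1).choose (i + 1) : R) * x ^ i * y ^ (m + 1 - i)
      = y * ((x + y) ^ (m + 1) - y ^ (m + 1)) := by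
  rw [add_pow, sum_range_succ' _ (m + 1), mul_sum]
  simp only [Nat.reduceSubDiff, pow_zero, tsub_zero, one_mul, Nat.choose_zero_right, Nat.cast_one,
    mul_one, add_sub_cancel_right, mul_sum]
  refine sum_congr rfl fun i hi => ?_
  rw [Nat.sub_add_comm (mem_range_succ_iff.mp hi), pow_succ]
  ring

end Binomial

theorem div_mul_choose_eq_choose_add_choose_succ {K : Type*} [Field K] [CharZero K] (m i : ℕ) :
    ((m : K) + 2 + i) / (i + 1) * m.choose i = m.choose i + (m + 1).choose (i + 1) := by
  have key : ((m : K) + 1) * m.choose i = (m + 1).choose (i + 1) * (i + 1) := by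
    exact_mod_cast Nat.add_one_mul_choose_eq m i
  field_simp
  linear_combination key

/-- For every `n ≥ 2`,
`Σ_{j=1}^{n-1} ((n−1+j)/j)·C(n−2,j−1)·(−1)^{j-1}·2^{n−j} = 2ⁿ`. -/
theorem alternating_binomial_identity (n : ℕ) (hn : 2 ≤ n) :
    ∑ j ∈ Finset.Icc 1 (n - 1),
        ((n : ℚ) - 1 + (j : ℚ)) / (j : ℚ) * ((n - 2).choose (j - 1) : ℚ)
          * (-1) ^ (j - 1) * 2 ^ (n - j)
      = 2 ^ n := by
  obtain ⟨m, rfl⟩ : ∃ m, n = m + 2 := ⟨n - 2, by omega⟩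
  have reindex : ∑ j ∈ Icc 1 (m + 2 - 1),
        ((↑(m + 2) : ℚ) - 1 + (j : ℚ)) / (j : ℚ) * ((m + 2 - 2).choose (j - 1) : ℚ)
          * (-1) ^ (j - 1) * 2 ^ (m + 2 - j)
      = ∑ i ∈ range (m + 1), (m.choose i + (m + 1).choose (i + 1) : ℚ)
          * (-1) ^ i * 2 ^ (m + 1 - i) := by
    rw [← Ico_add_one_right_eq_Icc, sum_Ico_eq_sum_range]
    refine sum_congr (by simp) fun i _ => ?_
    rw [add_comm 1 i, Nat.add_sub_cancel, Nat.add_sub_cancel,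
      show m + 2 - (i + 1) = m + 1 - i by omega, ← div_mul_choose_eq_choose_add_choose_succ]
    push_cast
    ring
  have h₁ := sum_range_choose_mul_pow_mul_pow_succ (-1 : ℚ) 2 m
  have h₂ := mul_sum_range_choose_succ_mul_pow_mul_pow (-1 : ℚ) 2 m
  rw [reindex]
  simp only [add_mul, sum_add_distrib]
  norm_num at h₁ h₂ ⊢
  linear_combination h₁ - h₂
end

section
/- If w is a flattened permutation of length n with occ(w) = r for some integer r ≥ 1, then n ≥ 1 + 2√r. -/
open Finset Polynomial

/-! For a fixed right end `j` (0-based), the positions `i` with `(i, j)` an occurrence of 13-2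
lie in `[1, j)` and no two of them are adjacent, since occurrences `(i, j)` and `(i + 1, j)`
would force `w_i < w_j < w_i`. Hence there are at most `⌊j/2⌋` of them, and summing over `j`
gives `4 occ(w) ≤ (|w| - 1)²`. The flattened permutation of `π ∈ S_n` has no repeated letter
(cycles with distinct minima are disjoint), so its length is at most `n`, and
`4r ≤ (n - 1)²` is the claim. -/

lemma card_le_div_two_of_succ_notMem {s : Finset ℕ} {j : ℕ} (hs : ∀ i ∈ s, 1 ≤ i ∧ i < j)
    (hsucc : ∀ i ∈ s, i + 1 ∉ s) : #s ≤ j / 2 := by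
  rw [← card_range (j / 2)]
  refine card_le_card_of_injOn (fun i => (i - 1) / 2) (fun i hi => ?_) (fun i hi i' hi' hii' => ?_)
  · have hi_bounds := hs i hi
    simp only [coe_range, Set.mem_Iio]
    omega
  · have hi_bounds := hs i hi
    have hi'_bounds := hs i' hi'
    have hi1 := hsucc i hi
    have hi'1 := hsucc i' hi'
    simp only at hii'
    rcases lt_trichotomy i i' with h | h | h
    · exact absurd (show i' = i + 1 by omega ▸ hi') hi1
    · exact h
    · exact absurd (show i = i' + 1 by omega ▸ hi) hi'1

lemma four_mul_sum_range_div_two_le : ∀ L : ℕ, 4 * ∑ j ∈ range L, j / 2 ≤ (L - 1) ^ 2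
  | 0 => by simp
  | 1 => by simp
  | L + 2 => by
    have ih := four_mul_sum_range_div_two_le L
    rw [sum_range_succ, sum_range_succ]
    have hpair : L / 2 + (L + 1) / 2 = L := by omega
    rcases L with _ | L
    · simp
    · rw [add_assoc, hpair, show L + 1 + 2 - 1 = L + 2 by omega]
      rw [Nat.add_sub_cancel] at ih
      nlinarith

lemma occ_le_sum_div_two (w : List ℕ) : occ w ≤ ∑ j ∈ range w.length, j / 2 := by
  rw [occ, card_filter, sum_product_right]
  refine sum_le_sum fun j _ => ?_
  rw [← card_filter]
  refine card_le_div_two_of_succ_notMem (fun i hi => ?_) (fun i hi hi1 => ?_)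
  · simp only [mem_filter] at hi
    exact ⟨hi.2.1, hi.2.2.1⟩
  · simp only [mem_filter, Nat.add_sub_cancel] at hi hi1
    exact absurd hi1.2.2.2.1 (not_lt.2 hi.2.2.2.2.le)

lemma four_mul_occ_le (w : List ℕ) : 4 * occ w ≤ (w.length - 1) ^ 2 :=
  (Nat.mul_le_mul_left 4 (occ_le_sum_div_two w)).trans (four_mul_sum_range_div_two_le _)

theorem Equiv.Perm.exists_lt_card_pow_apply_eq {α : Type*} [Fintype α] (f : Equiv.Perm α)
    (x : α) (j : ℕ) : ∃ k < Fintype.card α, (f ^ k) x = (f ^ j) x := by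
  have hpos := Function.minimalPeriod_pos_of_mem_periodicPts (f.injective.mem_periodicPts x)
  refine ⟨j % Function.minimalPeriod f x,
    (Nat.mod_lt j hpos).trans_le Function.minimalPeriod_le_card, ?_⟩
  simp only [Equiv.Perm.coe_pow, Function.iterate_mod_minimalPeriod_eq]

lemma mem_cycleList {n : ℕ} {π : Equiv.Perm (Fin n)} {m x : Fin n} :
    x ∈ cycleList π m ↔ ∃ k < Function.minimalPeriod π m, (π ^ k) m = x := by
  simp [cycleList]

lemma cycleList_nodup {n : ℕ} (π : Equiv.Perm (Fin n)) (m : Fin n) :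
    (cycleList π m).Nodup := by
  refine List.Nodup.map_on (fun a ha b hb hab => ?_) List.nodup_range
  exact Function.iterate_injOn_Iio_minimalPeriod (List.mem_range.1 ha) (List.mem_range.1 hb)
    (by simpa only [Equiv.Perm.coe_pow] using hab)

lemma le_of_mem_cycleMins_of_sameCycle {n : ℕ} {π : Equiv.Perm (Fin n)} {m y : Fin n}
    (hm : m ∈ cycleMins π) (hy : π.SameCycle m y) : m ≤ y := by
  obtain ⟨j, rfl⟩ := hy.exists_nat_pow_eq
  obtain ⟨k, hk, hkj⟩ := π.exists_lt_card_pow_apply_eq m j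
  rw [cycleMins, Finset.mem_sort, Finset.mem_filter] at hm
  rw [← hkj]
  exact hm.2 k (by simpa using hk)

lemma flatten_cycleList_nodup {n : ℕ} (π : Equiv.Perm (Fin n)) :
    ((cycleMins π).map (cycleList π)).flatten.Nodup := by
  refine List.nodup_flatten.2 ⟨?_, ?_⟩
  · simp only [List.mem_map]
    rintro _ ⟨m, -, rfl⟩
    exact cycleList_nodup π m
  · refine List.pairwise_map.2 ((Finset.sort_nodup _ _).imp_of_mem ?_)
    intro m m' hm hm' hne x hx hx'
    have hmm' : π.SameCycle m m' := by
      obtain ⟨k, -, rfl⟩ := mem_cycleList.1 hx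
      obtain ⟨k', -, hk'⟩ := mem_cycleList.1 hx'
      have hm'x : π.SameCycle m' ((π ^ k) m) :=
        hk' ▸ Equiv.Perm.sameCycle_pow_right.2 (Equiv.Perm.SameCycle.refl π m')
      exact (Equiv.Perm.sameCycle_pow_right.2 (Equiv.Perm.SameCycle.refl π m)).trans hm'x.symm
    exact hne (le_antisymm (le_of_mem_cycleMins_of_sameCycle hm hmm')
      (le_of_mem_cycleMins_of_sameCycle hm' hmm'.symm))

lemma flattenPerm_length_le {n : ℕ} (π : Equiv.Perm (Fin n)) : (flattenPerm π).length ≤ n := by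
  have h := (flatten_cycleList_nodup π).length_le_card
  rw [Fintype.card_fin] at h
  unfold flattenPerm
  rw [List.length_map]
  -- the cast `List (Fin n) → List ℕ` inside `flattenPerm` elaborates as `l >>= fun a => pure ↑a`
  simpa only [List.pure_def, List.bind_eq_flatMap, List.length_flatMap, List.length_singleton,
    List.map_const', List.sum_replicate, smul_eq_mul, mul_one] using h

/-- If a flattened permutation of length `n` has `r ≥ 1` occurrences of the
pattern 13-2, then `n ≥ 1 + 2√r`. -/
theorem length_lower_bound (n r : ℕ) (π : Equiv.Perm (Fin n)) (hr : 1 ≤ r)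
    (hocc : occ (flattenPerm π) = r) :
    (1 : ℝ) + 2 * Real.sqrt r ≤ (n : ℝ) := by
  have h4r : 4 * r ≤ (n - 1) ^ 2 := hocc ▸ (four_mul_occ_le _).trans
    (Nat.pow_le_pow_left (Nat.sub_le_sub_right (flattenPerm_length_le π) 1) 2)
  have hn : 1 ≤ n := Nat.one_le_iff_ne_zero.2 (by rintro rfl; simp at h4r; omega)
  have h4r_real : 4 * (r : ℝ) ≤ ((n : ℝ) - 1) ^ 2 := by
    have := (Nat.cast_le (α := ℝ)).2 h4r
    push_cast [Nat.cast_sub hn] at this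
    exact this
  have hsq : (2 * Real.sqrt r) ^ 2 ≤ ((n : ℝ) - 1) ^ 2 := by
    rw [mul_pow, Real.sq_sqrt (Nat.cast_nonneg r)]
    linarith
  have hsqrt := (pow_le_pow_iff_left₀ (by positivity) (by simpa using hn) two_ne_zero).1 hsq
  linarith
end

section
/- If w is a flattened permutation of length n whose second letter is i (i.e., w starts with 1, i), then occ(w) ≥ i − 2; consequently, for all r ≥ 0 and i ≥ r + 3, g_{n,r}(1i) = 0. -/
open Finset Polynomial

/-! Every letter `v` with `1 < v < i` occurs in a flattened permutation of length `n ≥ i`, and if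
the word starts with `1, i` it occurs after that prefix; with the adjacent pair `1, i` in front it
forms a 13-2 occurrence, and distinct letters give distinct occurrences. -/

theorem mem_cycleList_iff_sameCycle {n : ℕ} {π : Equiv.Perm (Fin n)} {c m : Fin n} :
    m ∈ cycleList π c ↔ π.SameCycle c m := by
  rw [← Cycle.mem_coe_iff, cycleList]
  simp only [← Equiv.Perm.iterate_eq_pow]
  rw [← Function.periodicOrbit_def, Function.mem_periodicOrbit_iff (π.injective.mem_periodicPts c)]
  simp only [Equiv.Perm.iterate_eq_pow]
  exact ⟨fun ⟨k, hk⟩ => ⟨k, by simpa using hk⟩, Equiv.Perm.SameCycle.exists_nat_pow_eq⟩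

theorem exists_mem_cycleMins_sameCycle {n : ℕ} (π : Equiv.Perm (Fin n)) (m : Fin n) :
    ∃ c ∈ cycleMins π, π.SameCycle c m := by
  obtain ⟨c, hc, hmin⟩ :=
    (univ.filter (π.SameCycle m)).exists_min_image id ⟨m, by simp [Equiv.Perm.SameCycle.refl]⟩
  rw [mem_filter] at hc
  refine ⟨c, ?_, hc.2.symm⟩
  simp only [cycleMins, mem_sort, mem_filter, mem_univ, true_and]
  exact fun k _ => hmin _ (by simpa using (Equiv.Perm.sameCycle_pow_right (n := k)).mpr hc.2)

theorem mem_flattenPerm_iff {n : ℕ} {π : Equiv.Perm (Fin n)} {v : ℕ} :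
    v ∈ flattenPerm π ↔ 0 < v ∧ v ≤ n := by
  simp only [flattenPerm, List.pure_def, List.bind_eq_flatMap, List.mem_map, List.mem_flatMap,
    List.mem_flatten, exists_exists_and_eq_and, mem_cycleList_iff_sameCycle, List.mem_singleton]
  constructor
  · rintro ⟨-, ⟨m, -, rfl⟩, rfl⟩
    exact ⟨m.val.succ_pos, m.isLt⟩
  · rintro ⟨hv, hvn⟩
    obtain ⟨c, hc, hcm⟩ := exists_mem_cycleMins_sameCycle π ⟨v - 1, by omega⟩
    exact ⟨_, ⟨_, ⟨c, hc, hcm⟩, rfl⟩, Nat.sub_add_cancel hv⟩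

theorem card_filter_mem_le_occ (a b : ℕ) (t : List ℕ) :
    ((Ioo a b).filter (· ∈ t)).card ≤ occ (a :: b :: t) := by
  refine card_le_card_of_injOn (fun v => (1, t.idxOf v + 2)) (fun v hv => ?_) ?_
  · simp only [coe_filter, mem_Ioo, Set.mem_ofPred_eq] at hv
    obtain ⟨⟨hav, hvb⟩, hvt⟩ := hv
    have hlt : t.idxOf v < t.length := List.idxOf_lt_length_iff.mpr hvt
    have hget : t.getD (t.idxOf v) 0 = v := by
      rw [List.getD_eq_getElem _ _ hlt, List.getElem_idxOf]
    simp only [coe_filter, Set.mem_ofPred_eq, mem_product, mem_range, List.length_cons,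
      List.getD_cons_succ, List.getD_cons_zero, Nat.sub_self]
    omega
  · intro v hv w _ hvw
    simp only [coe_filter, Set.mem_ofPred_eq] at hv
    simpa [List.idxOf_inj hv.2] using hvw

theorem sub_two_le_occ_flattenPerm {n i : ℕ} {π : Equiv.Perm (Fin n)}
    (h : [1, i] <+: flattenPerm π) : i - 2 ≤ occ (flattenPerm π) := by
  obtain ⟨t, ht⟩ := h
  have hw : flattenPerm π = 1 :: i :: t := ht.symm
  have hin : i ≤ n := (mem_flattenPerm_iff.mp (hw ▸ List.mem_cons_of_mem 1 List.mem_cons_self)).2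
  have hmem : ∀ v ∈ Ioo 1 i, v ∈ t := fun v hv => by
    rw [mem_Ioo] at hv
    have hv' : v ∈ flattenPerm π := mem_flattenPerm_iff.mpr ⟨by omega, by omega⟩
    simpa [hw, hv.1.ne', hv.2.ne] using hv'
  calc i - 2 = ((Ioo 1 i).filter (· ∈ t)).card := by
        rw [filter_true_of_mem hmem, Nat.card_Ioo]; omega
    _ ≤ occ (flattenPerm π) := hw ▸ card_filter_mem_le_occ 1 i t

/-- A flattened permutation starting with `1, i` has at least `i − 2`
occurrences of the pattern 13-2; consequently `g_{n,r}(1i) = 0` whenever `i ≥ r + 3`. -/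
theorem occ_lower_bound_of_prefix :
    (∀ (n : ℕ) (π : Equiv.Perm (Fin n)) (i : ℕ), [1, i] <+: flattenPerm π →
      i - 2 ≤ occ (flattenPerm π))
    ∧ ∀ (n r i : ℕ), r + 3 ≤ i → gCount n r [1, i] = 0 := by
  refine ⟨fun n π i => sub_two_le_occ_flattenPerm, fun n r i hri => ?_⟩
  rw [gCount, card_eq_zero, filter_eq_empty_iff]
  rintro π - ⟨hpre, rfl⟩
  have := sub_two_le_occ_flattenPerm hpre
  omega
end
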